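/- arXiv:2008.09546 — 2 statements merged into one kernel-verified Lean document; each statement's English description precedes it below -/
import Mathlib

section
/- Every trace for a MIG 𝒢 is a model of the LTL encoding of 𝒢. -/
/-- Links of a Molecular Interaction Graph: non-consuming productions `P ⇝ Q`,
consuming productions `P ⇒ Q`, activations `P → X` and inhibitions `P ⊣ X`. -/
inductive Link (α : Type) : Type where
  | prodP : Finset α → Finset α → Link α
  | prodC : Finset α → Finset α → Link α
  | act   : Finset α → Link α → Link α
  | inh   : Finset α → Link α → Link α
  deriving DecidableEq

namespace Link
variable {α : Type}

/-- The source (left-hand side) set of atoms of a link. -/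
def src : Link α → Finset α
  | prodP P _ => P
  | prodC P _ => P
  | act P _ => P
  | inh P _ => P

/-- The number of arrows occurring in a link, minus one (productions have size 0). -/
def size : Link α → ℕ
  | prodP _ _ => 0
  | prodC _ _ => 0
  | act _ X => X.size + 1
  | inh _ X => X.size + 1

/-- The produced atoms of a production (empty for regulations). -/
def prodTgt : Link α → Finset α
  | prodP _ Q => Q
  | prodC _ Q => Q
  | _ => ∅

/-- The consumed atoms of a consuming production (empty otherwise). -/
def consSrc : Link α → Finset α
  | prodC P _ => P
  | _ => ∅

end Link

variable {α : Type} [DecidableEq α]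

/-- `γ_a(X)`: the activations in `A` whose target is `X`. -/
def gammaA (A : Finset (Link α)) (X : Link α) : Finset (Link α) :=
  A.filter (fun Y => Y = Link.act Y.src X)

/-- `γ_i(X)`: the inhibitions in `I` whose target is `X`. -/
def gammaI (I : Finset (Link α)) (X : Link α) : Finset (Link α) :=
  I.filter (fun Y => Y = Link.inh Y.src X)

/-- Fuelled version of the mutually recursive definition of a link being active in `D`. -/
def ActiveAux (A I : Finset (Link α)) (D : Set α) : ℕ → Link α → Prop
  | 0, X => ↑X.src ⊆ D
  | m+1, X => ↑X.src ⊆ D ∧ (∀ Y ∈ gammaA A X, ActiveAux A I D m Y)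
      ∧ (∀ Y ∈ gammaI I X, ¬ ActiveAux A I D m Y)

/-- A Molecular Interaction Graph. -/
structure MIG (α : Type) [DecidableEq α] where
  At : Finset α
  Ex : Finset α
  Ed : Finset α
  hdisj : Disjoint Ex Ed
  hunion : Ex ∪ Ed = At
  Bpos : Finset α
  Bneg : Finset α
  hBpos : Bpos ⊆ At
  hBneg : Bneg ⊆ At
  P : Finset (Link α)
  C : Finset (Link α)
  A : Finset (Link α)
  I : Finset (Link α)
  hP : ∀ X ∈ P, ∃ p q : Finset α, X = Link.prodP p q ∧ p ⊆ At ∧ q ⊆ At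
  hC : ∀ X ∈ C, ∃ p q : Finset α, X = Link.prodC p q ∧ p ⊆ At ∧ q ⊆ At
  n : ℕ
  Afam : ℕ → Finset (Link α)
  Ifam : ℕ → Finset (Link α)
  hA : A = (Finset.range (n+1)).biUnion Afam
  hI : I = (Finset.range (n+1)).biUnion Ifam
  hA0 : ∀ X ∈ Afam 0, ∃ p Y, X = Link.act p Y ∧ p ⊆ At ∧ Y ∈ P ∪ C
  hI0 : ∀ X ∈ Ifam 0, ∃ p Y, X = Link.inh p Y ∧ p ⊆ At ∧ Y ∈ P ∪ C
  hAs : ∀ i, ∀ X ∈ Afam (i+1), ∃ p Y, X = Link.act p Y ∧ p ⊆ At ∧ Y ∈ Afam i ∪ Ifam i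
  hIs : ∀ i, ∀ X ∈ Ifam (i+1), ∃ p Y, X = Link.inh p Y ∧ p ⊆ At ∧ Y ∈ Afam i ∪ Ifam i

namespace MIG
variable (G : MIG α)

/-- Fuel sufficient for the recursion on regulations to be exact. -/
def maxFuel : ℕ := (G.A ∪ G.I).sup Link.size + 1

/-- All links of the MIG. -/
def Links : Finset (Link α) := G.P ∪ G.C ∪ G.A ∪ G.I

/-- A link is active in `D`. -/
def Active (D : Set α) (X : Link α) : Prop := ActiveAux G.A G.I D G.maxFuel X

/-- A link is inhibited in `D` iff it is not active in `D`. -/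
def Inhibited (D : Set α) (X : Link α) : Prop := ¬ G.Active D X

/-- Atom `p` is produced in `D`. -/
def Produced (D : Set α) (p : α) : Prop :=
  p ∈ G.Ed ∧ ∃ X ∈ G.P ∪ G.C, p ∈ X.prodTgt ∧ G.Active D X

/-- Atom `p` is consumed in `D`. -/
def Consumed (D : Set α) (p : α) : Prop :=
  p ∈ G.Ed ∧ ∃ X ∈ G.C, p ∈ X.consSrc ∧ G.Active D X

/-- `T` is a trace for the MIG `G`. -/
def IsTrace (T : ℕ → Set α) : Prop :=
  (∀ k, T k ⊆ ↑G.At) ∧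
  (∀ p ∈ G.Bpos, p ∈ T 0) ∧ (∀ p ∈ G.Bneg, p ∉ T 0) ∧
  (∀ k, ∀ p ∈ G.Ex, (p ∈ T (k+1) ↔ p ∈ T k)) ∧
  (∀ k, ∀ p ∈ G.Ed,
    (p ∈ T (k+1) ↔ G.Produced (T k) p ∨ (p ∈ T k ∧ ¬ G.Consumed (T k) p)))

end MIG

/-- LTL formulae (with classical connectives and the unary future operators). -/
inductive LTL (α : Type) : Type where
  | bot : LTL α
  | atom : α → LTL α
  | neg : LTL α → LTL α
  | or : LTL α → LTL α → LTL α
  | and : LTL α → LTL α → LTL α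
  | iff : LTL α → LTL α → LTL α
  | next : LTL α → LTL α
  | always : LTL α → LTL α
  deriving DecidableEq

namespace LTL
variable {β : Type}

/-- LTL satisfaction at position `k` of the interpretation `T`. -/
def Sat (T : ℕ → Set β) : ℕ → LTL β → Prop
  | _, bot => False
  | k, atom p => p ∈ T k
  | k, neg φ => ¬ Sat T k φ
  | k, or φ ψ => Sat T k φ ∨ Sat T k ψ
  | k, and φ ψ => Sat T k φ ∧ Sat T k ψ
  | k, iff φ ψ => (Sat T k φ ↔ Sat T k ψ)
  | k, next φ => Sat T (k+1) φ
  | k, always φ => ∀ j, k ≤ j → Sat T j φ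
  termination_by _ φ => φ

/-- Classical (propositional) satisfaction by a valuation `M`
(temporal operators are evaluated vacuously). -/
def PSat (M : Set β) : LTL β → Prop
  | bot => False
  | atom p => p ∈ M
  | neg φ => ¬ PSat M φ
  | or φ ψ => PSat M φ ∨ PSat M ψ
  | and φ ψ => PSat M φ ∧ PSat M ψ
  | iff φ ψ => (PSat M φ ↔ PSat M ψ)
  | next φ => PSat M φ
  | always φ => PSat M φ

/-- A formula is classical iff it contains no temporal operator. -/
def Classical : LTL β → Prop
  | bot => True
  | atom _ => True
  | neg φ => Classical φ
  | or φ ψ => Classical φ ∧ Classical ψ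
  | and φ ψ => Classical φ ∧ Classical ψ
  | iff φ ψ => Classical φ ∧ Classical ψ
  | next _ => False
  | always _ => False

/-- The number of logical operators of a formula. -/
def size : LTL β → ℕ
  | bot => 0
  | atom _ => 0
  | neg φ => size φ + 1
  | or φ ψ => size φ + size ψ + 1
  | and φ ψ => size φ + size ψ + 1
  | iff φ ψ => size φ + size ψ + 1
  | next φ => size φ + 1
  | always φ => size φ + 1

/-- The atoms occurring in a formula. -/
def atoms [DecidableEq β] : LTL β → Finset β
  | bot => ∅
  | atom p => {p}
  | neg φ => atoms φ
  | or φ ψ => atoms φ ∪ atoms ψ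
  | and φ ψ => atoms φ ∪ atoms ψ
  | iff φ ψ => atoms φ ∪ atoms ψ
  | next φ => atoms φ
  | always φ => atoms φ

end LTL

/-- Conjunction of a list of formulae. -/
def bigAnd {β : Type} : List (LTL β) → LTL β
  | [] => LTL.neg LTL.bot
  | φ :: l => LTL.and φ (bigAnd l)

/-- Disjunction of a list of formulae. -/
def bigOr {β : Type} : List (LTL β) → LTL β
  | [] => LTL.bot
  | φ :: l => LTL.or φ (bigOr l)

/-- Fuelled construction of the classical formula `A(X)` characterising activeness. -/
noncomputable def formAux (A I : Finset (Link α)) : ℕ → Link α → LTL α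
  | 0, X => bigAnd (X.src.toList.map LTL.atom)
  | m+1, X =>
      LTL.and (bigAnd (X.src.toList.map LTL.atom))
        (LTL.and (bigAnd ((gammaA A X).toList.map (fun Y => formAux A I m Y)))
          (bigAnd ((gammaI I X).toList.map (fun Y => LTL.neg (formAux A I m Y)))))

namespace MIG
variable (G : MIG α)

/-- The classical formula `A(X)`. -/
noncomputable def formA (X : Link α) : LTL α := formAux G.A G.I G.maxFuel X

/-- The productions having `p` in their right-hand side. -/
def prodsFor (p : α) : Finset (Link α) := (G.P ∪ G.C).filter (fun X => p ∈ X.prodTgt)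

/-- The consuming productions having `p` in their left-hand side. -/
def consFor (p : α) : Finset (Link α) := G.C.filter (fun X => p ∈ X.consSrc)

/-- The classical formula `Pr(p)` characterising production of `p`. -/
noncomputable def Pr (p : α) : LTL α :=
  if p ∈ G.Ex then LTL.bot else bigOr ((G.prodsFor p).toList.map G.formA)

/-- The classical formula `Cn(p)` characterising consumption of `p`. -/
noncomputable def Cn (p : α) : LTL α :=
  if p ∈ G.Ex then LTL.bot else bigOr ((G.consFor p).toList.map G.formA)

/-- The successor state axiom `□(○p ↔ Pr(p) ∨ (p ∧ ¬Cn(p)))`. -/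
noncomputable def SSA (p : α) : LTL α :=
  LTL.always (LTL.iff (LTL.next (LTL.atom p))
    (LTL.or (G.Pr p) (LTL.and (LTL.atom p) (LTL.neg (G.Cn p)))))

/-- The LTL encoding of a MIG: the literals of `ℬ` and the SSA of each atom. -/
noncomputable def encoding : Finset (LTL α) :=
  G.Bpos.image LTL.atom ∪ G.Bneg.image (fun p => LTL.neg (LTL.atom p)) ∪ G.At.image G.SSA

end MIG

/-- Grounding of a classical formula to time `k`: exogenous atoms are kept,
an endogenous atom `p` becomes the fresh atom `p_k`. -/
def ground (Ex : Finset α) (k : ℕ) : LTL α → LTL (α ⊕ α × ℕ)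
  | LTL.bot => LTL.bot
  | LTL.atom p => if p ∈ Ex then LTL.atom (Sum.inl p) else LTL.atom (Sum.inr (p, k))
  | LTL.neg φ => LTL.neg (ground Ex k φ)
  | LTL.or φ ψ => LTL.or (ground Ex k φ) (ground Ex k ψ)
  | LTL.and φ ψ => LTL.and (ground Ex k φ) (ground Ex k ψ)
  | LTL.iff φ ψ => LTL.iff (ground Ex k φ) (ground Ex k ψ)
  | LTL.next φ => LTL.next (ground Ex k φ)
  | LTL.always φ => LTL.always (ground Ex k φ)

namespace MIG
variable (G : MIG α)

/-- The grounding `⟦SSA_p⟧_k = (p_{k+1} ↔ ⟦Pr(p) ∨ (p ∧ ¬Cn(p))⟧_k)`. -/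
noncomputable def groundSSA (p : α) (k : ℕ) : LTL (α ⊕ α × ℕ) :=
  LTL.iff (LTL.atom (Sum.inr (p, k+1)))
    (ground G.Ex k (LTL.or (G.Pr p) (LTL.and (LTL.atom p) (LTL.neg (G.Cn p)))))

/-- The grounding of the LTL encoding up to time `n`. -/
noncomputable def groundEnc (n : ℕ) : Finset (LTL (α ⊕ α × ℕ)) :=
  (G.Bpos.image fun p => ground G.Ex 0 (LTL.atom p)) ∪
  (G.Bneg.image fun p => ground G.Ex 0 (LTL.neg (LTL.atom p))) ∪
  ((G.Ed ×ˢ Finset.range n).image fun q => G.groundSSA q.1 q.2)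

end MIG

lemma sat_bigAnd {β : Type} (T : ℕ → Set β) (k : ℕ) (l : List (LTL β)) :
    LTL.Sat T k (bigAnd l) ↔ ∀ φ ∈ l, LTL.Sat T k φ := by
  induction l with
  | nil => simp [bigAnd, LTL.Sat]
  | cons a l ih => simp [bigAnd, LTL.Sat, ih]

lemma sat_bigOr {β : Type} (T : ℕ → Set β) (k : ℕ) (l : List (LTL β)) :
    LTL.Sat T k (bigOr l) ↔ ∃ φ ∈ l, LTL.Sat T k φ := by
  induction l with
  | nil => simp [bigOr, LTL.Sat]
  | cons a l ih => simp [bigOr, LTL.Sat, ih]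

lemma sat_formAux {α : Type} [DecidableEq α] (A I : Finset (Link α))
    (T : ℕ → Set α) (k : ℕ) (m : ℕ) (X : Link α) :
    LTL.Sat T k (formAux A I m X) ↔ ActiveAux A I (T k) m X := by
  induction m generalizing X with
  | zero =>
    simp [formAux, ActiveAux, sat_bigAnd, LTL.Sat, Set.subset_def]
  | succ m ih =>
    simp [formAux, ActiveAux, sat_bigAnd, LTL.Sat, Set.subset_def, ih]

lemma sat_formA {α : Type} [DecidableEq α] (G : MIG α)
    (T : ℕ → Set α) (k : ℕ) (X : Link α) :
    LTL.Sat T k (G.formA X) ↔ G.Active (T k) X := sat_formAux _ _ _ _ _ _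

lemma sat_Pr {α : Type} [DecidableEq α] (G : MIG α) (T : ℕ → Set α) (k : ℕ)
    (p : α) (hpd : p ∈ G.Ed) (hpe : p ∉ G.Ex) :
    LTL.Sat T k (G.Pr p) ↔ G.Produced (T k) p := by
  simp only [MIG.Pr, if_neg hpe, sat_bigOr, List.mem_map, Finset.mem_toList,
    MIG.prodsFor, Finset.mem_filter, MIG.Produced]
  constructor
  · rintro ⟨φ, ⟨X, ⟨hX, hpt⟩, rfl⟩, hs⟩
    exact ⟨hpd, X, hX, hpt, (sat_formA G T k X).1 hs⟩
  · rintro ⟨-, X, hX, hpt, ha⟩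
    exact ⟨G.formA X, ⟨X, ⟨hX, hpt⟩, rfl⟩, (sat_formA G T k X).2 ha⟩

lemma sat_Cn {α : Type} [DecidableEq α] (G : MIG α) (T : ℕ → Set α) (k : ℕ)
    (p : α) (hpd : p ∈ G.Ed) (hpe : p ∉ G.Ex) :
    LTL.Sat T k (G.Cn p) ↔ G.Consumed (T k) p := by
  simp only [MIG.Cn, if_neg hpe, sat_bigOr, List.mem_map, Finset.mem_toList,
    MIG.consFor, Finset.mem_filter, MIG.Consumed]
  constructor
  · rintro ⟨φ, ⟨X, ⟨hX, hpt⟩, rfl⟩, hs⟩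
    exact ⟨hpd, X, hX, hpt, (sat_formA G T k X).1 hs⟩
  · rintro ⟨-, X, hX, hpt, ha⟩
    exact ⟨G.formA X, ⟨X, ⟨hX, hpt⟩, rfl⟩, (sat_formA G T k X).2 ha⟩

/-- every trace for a MIG `G` is a model of the LTL encoding of `G`. -/
theorem trace_models_encoding {α : Type} [DecidableEq α]
    (G : MIG α) (T : ℕ → Set α) (hT : G.IsTrace T) :
    ∀ φ ∈ G.encoding, LTL.Sat T 0 φ := by
  obtain ⟨hsub, hB1, hB2, hEx, hEd⟩ := hT
  intro φ hφ
  simp only [MIG.encoding, Finset.mem_union, Finset.mem_image] at hφ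
  rcases hφ with (⟨p, hp, rfl⟩ | ⟨p, hp, rfl⟩) | ⟨p, hp, rfl⟩
  · simpa [LTL.Sat] using hB1 p hp
  · simpa [LTL.Sat] using hB2 p hp
  · simp only [MIG.SSA, LTL.Sat]
    intro j _
    by_cases hpe : p ∈ G.Ex
    · simp only [MIG.Pr, MIG.Cn, if_pos hpe]
      simp only [LTL.Sat]
      simpa using hEx j p hpe
    · have hpd : p ∈ G.Ed := by
        have := G.hunion ▸ hp
        rcases Finset.mem_union.1 this with h | h
        · exact absurd h hpe
        · exact h
      rw [sat_Pr G T j p hpd hpe, sat_Cn G T j p hpd hpe]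
      exact hEd j p hpd
end

section
/- Model correspondence for bounded grounding: let 𝒢 be a MIG, S its LTL encoding, and ⟦S⟧_n its grounding up to time n. If T = T_0, T_1, … is a model of S and M is a model of ⟦S⟧_n that corresponds to T up to time n, then for every classical propositional formula φ over At and every k with 0 ≤ k ≤ n: M ⊨ ⟦φ⟧_k if and only if T_k ⊨ φ. -/
variable {α : Type} [DecidableEq α]

section Aux

variable {α : Type} [DecidableEq α]

lemma classical_bigAnd {l : List (LTL α)} (h : ∀ φ ∈ l, φ.Classical) :
    (bigAnd l).Classical := by
  induction l with
  | nil => simp [bigAnd, LTL.Classical]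
  | cons a l ih =>
    simp only [bigAnd, LTL.Classical]
    exact ⟨h a (by simp), ih fun φ hφ => h φ (by simp [hφ])⟩

lemma classical_bigOr {l : List (LTL α)} (h : ∀ φ ∈ l, φ.Classical) :
    (bigOr l).Classical := by
  induction l with
  | nil => simp [bigOr, LTL.Classical]
  | cons a l ih =>
    simp only [bigOr, LTL.Classical]
    exact ⟨h a (by simp), ih fun φ hφ => h φ (by simp [hφ])⟩

lemma mem_atoms_bigAnd {l : List (LTL α)} {p : α} :
    p ∈ (bigAnd l).atoms ↔ ∃ φ ∈ l, p ∈ φ.atoms := by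
  induction l with
  | nil => simp [bigAnd, LTL.atoms]
  | cons a l ih => simp [bigAnd, LTL.atoms, ih]

lemma mem_atoms_bigOr {l : List (LTL α)} {p : α} :
    p ∈ (bigOr l).atoms ↔ ∃ φ ∈ l, p ∈ φ.atoms := by
  induction l with
  | nil => simp [bigOr, LTL.atoms]
  | cons a l ih => simp [bigOr, LTL.atoms, ih]

lemma classical_formAux (A I : Finset (Link α)) (m : ℕ) (X : Link α) :
    (formAux A I m X).Classical := by
  induction m generalizing X with
  | zero =>
    rw [formAux]
    exact classical_bigAnd (by simp +contextual [LTL.Classical])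
  | succ m ih =>
    rw [formAux]
    refine ⟨classical_bigAnd (by simp +contextual [LTL.Classical]), ?_, ?_⟩
    · exact classical_bigAnd (by
        intro φ hφ
        simp only [List.mem_map] at hφ
        obtain ⟨Y, _, rfl⟩ := hφ
        exact ih Y)
    · exact classical_bigAnd (by
        intro φ hφ
        simp only [List.mem_map] at hφ
        obtain ⟨Y, _, rfl⟩ := hφ
        exact ih Y)

lemma atoms_formAux (A I : Finset (Link α)) (At : Finset α)
    (hAI : ∀ Y ∈ A ∪ I, Y.src ⊆ At) (m : ℕ) (X : Link α) (hX : X.src ⊆ At) :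
    (formAux A I m X).atoms ⊆ At := by
  induction m generalizing X with
  | zero =>
    intro p hp
    rw [formAux] at hp
    rw [mem_atoms_bigAnd] at hp
    obtain ⟨φ, hφ, hpφ⟩ := hp
    simp only [List.mem_map, Finset.mem_toList] at hφ
    obtain ⟨q, hq, rfl⟩ := hφ
    simp only [LTL.atoms, Finset.mem_singleton] at hpφ
    exact hX (hpφ ▸ hq)
  | succ m ih =>
    intro p hp
    rw [formAux] at hp
    simp only [LTL.atoms, Finset.mem_union] at hp
    rcases hp with hp | hp | hp
    · rw [mem_atoms_bigAnd] at hp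
      obtain ⟨φ, hφ, hpφ⟩ := hp
      simp only [List.mem_map, Finset.mem_toList] at hφ
      obtain ⟨q, hq, rfl⟩ := hφ
      simp only [LTL.atoms, Finset.mem_singleton] at hpφ
      exact hX (hpφ ▸ hq)
    · rw [mem_atoms_bigAnd] at hp
      obtain ⟨φ, hφ, hpφ⟩ := hp
      simp only [List.mem_map, Finset.mem_toList] at hφ
      obtain ⟨Y, hY, rfl⟩ := hφ
      have hYA : Y ∈ A := Finset.mem_of_mem_filter Y hY
      exact ih Y (hAI Y (Finset.mem_union_left _ hYA)) hpφ
    · rw [mem_atoms_bigAnd] at hp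
      obtain ⟨φ, hφ, hpφ⟩ := hp
      simp only [List.mem_map, Finset.mem_toList] at hφ
      obtain ⟨Y, hY, rfl⟩ := hφ
      simp only [LTL.atoms] at hpφ
      have hYI : Y ∈ I := Finset.mem_of_mem_filter Y hY
      exact ih Y (hAI Y (Finset.mem_union_right _ hYI)) hpφ

lemma MIG.src_subset (G : MIG α) : ∀ Y ∈ G.A ∪ G.I, Y.src ⊆ G.At := by
  intro Y hY
  rcases Finset.mem_union.mp hY with hY | hY
  · rw [G.hA] at hY
    obtain ⟨i, _, hYi⟩ := Finset.mem_biUnion.mp hY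
    cases i with
    | zero => obtain ⟨p, Z, rfl, hp, _⟩ := G.hA0 Y hYi; simpa [Link.src] using hp
    | succ i => obtain ⟨p, Z, rfl, hp, _⟩ := G.hAs i Y hYi; simpa [Link.src] using hp
  · rw [G.hI] at hY
    obtain ⟨i, _, hYi⟩ := Finset.mem_biUnion.mp hY
    cases i with
    | zero => obtain ⟨p, Z, rfl, hp, _⟩ := G.hI0 Y hYi; simpa [Link.src] using hp
    | succ i => obtain ⟨p, Z, rfl, hp, _⟩ := G.hIs i Y hYi; simpa [Link.src] using hp

lemma MIG.src_subset_PC (G : MIG α) : ∀ Y ∈ G.P ∪ G.C, Y.src ⊆ G.At := by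
  intro Y hY
  rcases Finset.mem_union.mp hY with hY | hY
  · obtain ⟨p, q, rfl, hp, _⟩ := G.hP Y hY; simpa [Link.src] using hp
  · obtain ⟨p, q, rfl, hp, _⟩ := G.hC Y hY; simpa [Link.src] using hp

lemma MIG.classical_Pr (G : MIG α) (p : α) : (G.Pr p).Classical := by
  rw [MIG.Pr]
  split
  · trivial
  · refine classical_bigOr ?_
    intro φ hφ
    simp only [List.mem_map] at hφ
    obtain ⟨Y, _, rfl⟩ := hφ
    exact classical_formAux _ _ _ _

lemma MIG.classical_Cn (G : MIG α) (p : α) : (G.Cn p).Classical := by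
  rw [MIG.Cn]
  split
  · trivial
  · refine classical_bigOr ?_
    intro φ hφ
    simp only [List.mem_map] at hφ
    obtain ⟨Y, _, rfl⟩ := hφ
    exact classical_formAux _ _ _ _

lemma MIG.atoms_Pr (G : MIG α) (p : α) : (G.Pr p).atoms ⊆ G.At := by
  rw [MIG.Pr]
  split
  · simp [LTL.atoms]
  · intro q hq
    rw [mem_atoms_bigOr] at hq
    obtain ⟨φ, hφ, hqφ⟩ := hq
    simp only [List.mem_map, Finset.mem_toList] at hφ
    obtain ⟨Y, hY, rfl⟩ := hφ
    have : Y ∈ G.P ∪ G.C := Finset.mem_of_mem_filter Y hY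
    exact atoms_formAux G.A G.I G.At G.src_subset G.maxFuel Y
      (G.src_subset_PC Y this) hqφ

lemma MIG.atoms_Cn (G : MIG α) (p : α) : (G.Cn p).atoms ⊆ G.At := by
  rw [MIG.Cn]
  split
  · simp [LTL.atoms]
  · intro q hq
    rw [mem_atoms_bigOr] at hq
    obtain ⟨φ, hφ, hqφ⟩ := hq
    simp only [List.mem_map, Finset.mem_toList] at hφ
    obtain ⟨Y, hY, rfl⟩ := hφ
    have : Y ∈ G.C := Finset.mem_of_mem_filter Y hY
    exact atoms_formAux G.A G.I G.At G.src_subset G.maxFuel Y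
      (G.src_subset_PC Y (Finset.mem_union_right _ this)) hqφ

/-- Formula-level correspondence at time `k` from atom-level correspondence. -/
lemma ground_corr_of_atoms {Ex : Finset α} {M : Set (α ⊕ α × ℕ)} {T : ℕ → Set α}
    {k : ℕ} (φ : LTL α) (hc : φ.Classical)
    (h : ∀ p ∈ φ.atoms, (LTL.PSat M (ground Ex k (LTL.atom p)) ↔ p ∈ T k)) :
    LTL.PSat M (ground Ex k φ) ↔ LTL.Sat T k φ := by
  induction φ with
  | bot => simp [ground, LTL.PSat, LTL.Sat]
  | atom p =>
    rw [LTL.Sat]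
    exact h p (by simp [LTL.atoms])
  | neg φ ih =>
    rw [ground, LTL.PSat, LTL.Sat]
    exact not_congr (ih hc fun p hp => h p (by simpa [LTL.atoms] using hp))
  | or φ ψ ihφ ihψ =>
    rw [ground, LTL.PSat, LTL.Sat]
    exact or_congr (ihφ hc.1 fun p hp => h p (by simp [LTL.atoms, hp]))
      (ihψ hc.2 fun p hp => h p (by simp [LTL.atoms, hp]))
  | and φ ψ ihφ ihψ =>
    rw [ground, LTL.PSat, LTL.Sat]
    exact and_congr (ihφ hc.1 fun p hp => h p (by simp [LTL.atoms, hp]))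
      (ihψ hc.2 fun p hp => h p (by simp [LTL.atoms, hp]))
  | iff φ ψ ihφ ihψ =>
    rw [ground, LTL.PSat, LTL.Sat]
    exact iff_congr (ihφ hc.1 fun p hp => h p (by simp [LTL.atoms, hp]))
      (ihψ hc.2 fun p hp => h p (by simp [LTL.atoms, hp]))
  | next φ _ => exact absurd hc (by simp [LTL.Classical])
  | always φ _ => exact absurd hc (by simp [LTL.Classical])

end Aux

/-- model correspondence for bounded grounding: if `T` is a model
of the LTL encoding `S` of a MIG `G` and `M` is a model of the grounding `⟦S⟧ₙ`
corresponding to `T` up to time `n`, then for every classical formula `φ` over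
`At` and every `k ≤ n`: `M ⊨ ⟦φ⟧ₖ` iff `T k ⊨ φ`. -/
theorem ground_model_correspondence {α : Type} [DecidableEq α]
    (G : MIG α) (n : ℕ) (T : ℕ → Set α) (hAt : ∀ k, T k ⊆ ↑G.At)
    (hTS : ∀ φ ∈ G.encoding, LTL.Sat T 0 φ)
    (M : Set (α ⊕ α × ℕ))
    (hM : ∀ φ ∈ G.groundEnc n, LTL.PSat M φ)
    (hcorr : ∀ p ∈ G.At,
      (LTL.PSat M (ground G.Ex 0 (LTL.atom p)) ↔ LTL.Sat T 0 (LTL.atom p))) :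
    ∀ φ : LTL α, φ.Classical → φ.atoms ⊆ G.At →
      ∀ k, k ≤ n → (LTL.PSat M (ground G.Ex k φ) ↔ LTL.Sat T k φ) := by
  -- SSA semantics on the trace side
  have hssa : ∀ k, ∀ p ∈ G.At, (p ∈ T (k+1) ↔
      (LTL.Sat T k (G.Pr p) ∨ (p ∈ T k ∧ ¬ LTL.Sat T k (G.Cn p)))) := by
    intro k p hp
    have hmem : G.SSA p ∈ G.encoding := by
      unfold MIG.encoding
      exact Finset.mem_union_right _ (Finset.mem_image_of_mem _ hp)
    have := hTS _ hmem
    unfold MIG.SSA at this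
    rw [LTL.Sat] at this
    have h2 := this k (Nat.zero_le k)
    simp only [LTL.Sat] at h2
    exact h2
  -- atom-level correspondence at each time k ≤ n
  have hatom : ∀ k, k ≤ n → ∀ p ∈ G.At,
      (LTL.PSat M (ground G.Ex k (LTL.atom p)) ↔ p ∈ T k) := by
    intro k
    induction k with
    | zero =>
      intro _ p hp
      simpa [LTL.Sat] using hcorr p hp
    | succ k ih =>
      intro hk p hp
      have hk' : k ≤ n := Nat.le_of_succ_le hk
      by_cases hEx : p ∈ G.Ex
      · -- exogenous: Pr p = Cn p = bot
        have hstep : p ∈ T (k+1) ↔ p ∈ T k := by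
          have := hssa k p hp
          simp only [MIG.Pr, MIG.Cn, if_pos hEx, LTL.Sat] at this
          simpa using this
        have hg : ∀ j, ground G.Ex j (LTL.atom p) = LTL.atom (Sum.inl p) := by
          intro j; rw [ground]; simp [hEx]
        rw [hg, hstep, ← hg k]
        exact ih hk' p hp
      · -- endogenous
        have hEd : p ∈ G.Ed := by
          have := G.hunion
          have hpu : p ∈ G.Ex ∪ G.Ed := this ▸ hp
          rcases Finset.mem_union.mp hpu with h | h
          · exact absurd h hEx
          · exact h
        have hkn : k < n := hk
        have hmem : G.groundSSA p k ∈ G.groundEnc n := by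
          unfold MIG.groundEnc
          refine Finset.mem_union_right _ ?_
          refine Finset.mem_image.mpr ⟨(p, k), ?_, rfl⟩
          exact Finset.mem_product.mpr ⟨hEd, Finset.mem_range.mpr hkn⟩
        have hMssa := hM _ hmem
        unfold MIG.groundSSA at hMssa
        rw [LTL.PSat] at hMssa
        -- correspondence for the body ψ = Pr p ∨ (p ∧ ¬Cn p) at time k
        set ψ : LTL α := LTL.or (G.Pr p) (LTL.and (LTL.atom p) (LTL.neg (G.Cn p)))
          with hψ
        have hψc : ψ.Classical :=
          ⟨G.classical_Pr p, trivial, G.classical_Cn p⟩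
        have hψcorr : LTL.PSat M (ground G.Ex k ψ) ↔ LTL.Sat T k ψ := by
          refine ground_corr_of_atoms ψ hψc ?_
          intro q hq
          have hqAt : q ∈ G.At := by
            simp only [hψ, LTL.atoms, Finset.mem_union, Finset.mem_singleton] at hq
            rcases hq with h | h | h
            · exact G.atoms_Pr p h
            · exact h ▸ hp
            · exact G.atoms_Cn p h
          exact ih hk' q hqAt
        have hgp : ground G.Ex (k+1) (LTL.atom p) = LTL.atom (Sum.inr (p, k+1)) := by
          rw [ground]; simp [hEx]
        rw [hgp]
        have hSatψ : LTL.Sat T k ψ ↔ p ∈ T (k+1) := by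
          rw [hψ]
          simp only [LTL.Sat]
          exact (hssa k p hp).symm
        calc LTL.PSat M (LTL.atom (Sum.inr (p, k+1)))
            ↔ LTL.PSat M (ground G.Ex k ψ) := hMssa
          _ ↔ LTL.Sat T k ψ := hψcorr
          _ ↔ p ∈ T (k+1) := hSatψ
  intro φ hcl hat k hk
  exact ground_corr_of_atoms φ hcl fun p hp => hatom k hk p (hat hp)
end
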